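/- A finite dismantlable lattice with n elements has nullity r − 1 if and only if it is an adjunct of r chains. -/

import Mathlib

/-!
If `c` is a finite chain, the covers of the adjunct `s ]ᵇₐ c` are those of `s`, the `|c| - 1`
covers of `c`, and `a ⋖ min c`, `max c ⋖ b`. So every adjoined chain raises
`#covers - #elements` by one, and as the cover graph of a finite lattice is connected, an
adjunct of `r` chains has nullity `r - 1`.

Conversely, a dismantlable lattice is an adjunct of chains, built along its chain of
sublattices. The new element `x` of `insert x s` is either a new bottom or top, absorbed by the
first chain, or else `u = ⋁ {y ∈ s | y < x}` and `w = ⋀ {y ∈ s | x < y}` lie in `s`. If `u ⋖ w`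
in `s`, then `x` joins the chain responsible for this cover; otherwise `{x}` is adjoined as a
new chain at `(u, w)`.
-/

/-- The cover graph of a poset: vertices are the elements, edges are covering pairs. -/
def coverGraph (α : Type*) [PartialOrder α] : SimpleGraph α where
  Adj x y := x ⋖ y ∨ y ⋖ x
  symm := ⟨fun _ _ h => h.symm⟩
  loopless := ⟨fun x h => by rcases h with h | h <;> exact h.lt.false⟩

/-- The nullity of a (finite) poset: `m - n + c` where `m` is the number of edges,
`n` the number of vertices and `c` the number of connected components of the cover graph. -/
noncomputable def nullity (α : Type*) [PartialOrder α] : ℤ :=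
  (Nat.card (coverGraph α).edgeSet : ℤ) - (Nat.card α : ℤ)
    + (Nat.card (coverGraph α).ConnectedComponent : ℤ)

/-- A subset of a lattice closed under meets and joins (a sublattice). -/
def IsSublatticeSet {α : Type*} [Lattice α] (s : Set α) : Prop :=
  ∀ x ∈ s, ∀ y ∈ s, x ⊓ y ∈ s ∧ x ⊔ y ∈ s

/-- A finite lattice of order `n` is dismantlable if there is a chain
`L₁ ⊂ L₂ ⊂ ⋯ ⊂ Lₙ = L` of sublattices with `|Lᵢ| = i`. -/
def Dismantlable (α : Type*) [Lattice α] [Fintype α] : Prop :=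
  ∃ f : ℕ → Set α,
    (∀ i, 1 ≤ i → i ≤ Fintype.card α → (f i).ncard = i ∧ IsSublatticeSet (f i)) ∧
    (∀ i, 1 ≤ i → i < Fintype.card α → f i ⊆ f (i + 1)) ∧
    f (Fintype.card α) = Set.univ

/-- `AdjunctRep C₀ s l` : the subset `s`, with the order induced from the ambient
lattice, is an adjunct of chains starting with the chain `C₀`; the list `l` records, in
order, the adjoined chains together with their adjunct pairs, i.e.
`s = C₀ ]^{b₁}_{a₁} C₁ ]^{b₂}_{a₂} C₂ ⋯ ]^{b_k}_{a_k} C_k` with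
`l = [(C₁,a₁,b₁), …, (C_k,a_k,b_k)]`.  In the step, the adjunct pair `(a,b)` lies in
the part `s` built so far, with `a < b` and `a` not covered by `b` in `s`, and the
ambient order on `s ∪ c` is exactly the adjunct order: for `x ∈ s` and `y ∈ c`,
`x ≤ y ↔ x ≤ a` and `y ≤ x ↔ b ≤ x`. -/
inductive AdjunctRep {α : Type*} [Lattice α] (C₀ : Set α) :
    Set α → List (Set α × α × α) → Prop
  | base (hchain : IsChain (· ≤ ·) C₀) (hne : C₀.Nonempty) : AdjunctRep C₀ C₀ []
  | step {s : Set α} {l : List (Set α × α × α)} (c : Set α) (a b : α)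
      (hs : AdjunctRep C₀ s l) (hc : IsChain (· ≤ ·) c) (hcne : c.Nonempty)
      (hdisj : Disjoint s c) (ha : a ∈ s) (hb : b ∈ s) (hab : a < b)
      (hnotcov : ∃ z ∈ s, a < z ∧ z < b)
      (hord : ∀ x ∈ s, ∀ y ∈ c, (x ≤ y ↔ x ≤ a) ∧ (y ≤ x ↔ b ≤ x)) :
      AdjunctRep C₀ (s ∪ c) (l ++ [(c, a, b)])

open Set

section CoverPairs

variable {α : Type*} [PartialOrder α]

def coverPairs (s : Set α) : Set (α × α) :=
  {p | p.1 ∈ s ∧ p.2 ∈ s ∧ p.1 < p.2 ∧ ∀ z ∈ s, ¬(p.1 < z ∧ z < p.2)}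

lemma coverPairs_univ : coverPairs (univ : Set α) = {p | p.1 ⋖ p.2} := by
  ext p
  simp [coverPairs, CovBy]

lemma IsChain.exists_isGreatest {s : Set α} (hc : IsChain (· ≤ ·) s) (hs : s.Finite)
    (hne : s.Nonempty) : ∃ M, IsGreatest s M := by
  obtain ⟨M, hM⟩ := hs.exists_maximal hne
  exact ⟨M, hM.prop, fun y hy => (hc.total hy hM.prop).elim id (hM.2 hy)⟩

lemma IsChain.exists_isLeast {s : Set α} (hc : IsChain (· ≤ ·) s) (hs : s.Finite)
    (hne : s.Nonempty) : ∃ m, IsLeast s m := by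
  obtain ⟨m, hm⟩ := hs.exists_minimal hne
  exact ⟨m, hm.prop, fun y hy => (hc.total hm.prop hy).elim id (hm.2 hy)⟩

/-- Sending a cover to its lower element identifies the covers of a chain with the chain
minus its top. -/
lemma IsChain.ncard_coverPairs_add_one {s : Set α} (hc : IsChain (· ≤ ·) s) (hs : s.Finite)
    (hne : s.Nonempty) : (coverPairs s).ncard + 1 = s.ncard := by
  obtain ⟨M, hM⟩ := hc.exists_isGreatest hs hne
  have hinj : InjOn Prod.fst (coverPairs s) := by
    rintro ⟨x, y⟩ ⟨-, hy, hxy, hcov⟩ ⟨x', y'⟩ ⟨-, hy', hxy', hcov'⟩ (rfl : x = x')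
    suffices y = y' by rw [this]
    by_contra hne
    rcases (hc hy hy' hne) with h | h
    · exact hcov' y hy ⟨hxy, h.lt_of_ne hne⟩
    · exact hcov y' hy' ⟨hxy', h.lt_of_ne (Ne.symm hne)⟩
  have himage : Prod.fst '' coverPairs s = s \ {M} := by
    ext x
    constructor
    · rintro ⟨⟨x, y⟩, ⟨hx, hy, hxy, -⟩, rfl⟩
      exact ⟨hx, fun (hxM : x = M) => (hxM ▸ hxy).not_ge (hM.2 hy)⟩
    · rintro ⟨hx, hxM : x ≠ M⟩
      obtain ⟨y, ⟨hy, hxy⟩, hmin⟩ := (hs.sep (x < ·)).exists_minimal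
        ⟨M, hM.1, (hM.2 hx).lt_of_ne hxM⟩
      exact ⟨(x, y), ⟨hx, hy, hxy, fun z hz ⟨hxz, hzy⟩ => hzy.not_ge (hmin ⟨hz, hxz⟩ hzy.le)⟩, rfl⟩
  rw [← hinj.ncard_image, himage, ncard_sdiff_singleton_add_one hM.1 hs]

end CoverPairs

section AdjunctStep

variable {α : Type*} [PartialOrder α]

/-- `s ∪ c`, with the order induced from `α`, is the adjunct `s ]ᵇₐ c`. -/
structure IsAdjunct (s c : Set α) (a b : α) : Prop where
  disjoint : Disjoint s c
  left_mem : a ∈ s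
  right_mem : b ∈ s
  exists_between : ∃ z ∈ s, a < z ∧ z < b
  le_iff : ∀ x ∈ s, ∀ y ∈ c, (x ≤ y ↔ x ≤ a) ∧ (y ≤ x ↔ b ≤ x)

namespace IsAdjunct

variable {s c : Set α} {a b : α}

lemma lt (h : IsAdjunct s c a b) : a < b :=
  let ⟨_, _, haz, hzb⟩ := h.exists_between
  haz.trans hzb

lemma notMem_left (h : IsAdjunct s c a b) {y : α} (hy : y ∈ c) : y ∉ s :=
  fun hys => h.disjoint.ne_of_mem hys hy rfl

lemma left_lt (h : IsAdjunct s c a b) {y : α} (hy : y ∈ c) : a < y :=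
  ((h.le_iff a h.left_mem y hy).1.2 le_rfl).lt_of_ne
    fun hay => h.notMem_left hy (hay ▸ h.left_mem)

lemma lt_right (h : IsAdjunct s c a b) {y : α} (hy : y ∈ c) : y < b :=
  ((h.le_iff b h.right_mem y hy).2.2 le_rfl).lt_of_ne
    fun hyb => h.notMem_left hy (hyb ▸ h.right_mem)

lemma insert_left {x : α} (h : IsAdjunct s c a b) (hx : x ∉ c)
    (hord : ∀ y ∈ c, (x ≤ y ↔ x ≤ a) ∧ (y ≤ x ↔ b ≤ x)) : IsAdjunct (insert x s) c a b where
  disjoint := disjoint_insert_left.2 ⟨hx, h.disjoint⟩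
  left_mem := mem_insert_of_mem _ h.left_mem
  right_mem := mem_insert_of_mem _ h.right_mem
  exists_between := let ⟨z, hz, hbetween⟩ := h.exists_between; ⟨z, mem_insert_of_mem _ hz, hbetween⟩
  le_iff := by
    rintro p (rfl | hp)
    exacts [hord, h.le_iff p hp]

lemma coverPairs_union_subset (h : IsAdjunct s c a b) {m M : α} (hm : IsLeast c m)
    (hM : IsGreatest c M) :
    coverPairs (s ∪ c) ⊆ coverPairs s ∪ coverPairs c ∪ {(a, m), (M, b)} := by
  rintro ⟨x, y⟩ ⟨hx, hy, hxy, hcov⟩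
  have hcov_s : ∀ z ∈ s, ¬(x < z ∧ z < y) := fun z hz => hcov z (Or.inl hz)
  have hcov_c : ∀ z ∈ c, ¬(x < z ∧ z < y) := fun z hz => hcov z (Or.inr hz)
  rcases hx with hx | hx <;> rcases hy with hy | hy
  · exact Or.inl (Or.inl ⟨hx, hy, hxy, hcov_s⟩)
  · have hxa : x ≤ a := (h.le_iff x hx y hy).1.1 hxy.le
    obtain rfl : x = a := by_contra fun hne =>
      hcov_s a h.left_mem ⟨hxa.lt_of_ne hne, h.left_lt hy⟩
    obtain rfl : y = m := by_contra fun hne =>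
      hcov_c m hm.1 ⟨h.left_lt hm.1, (hm.2 hy).lt_of_ne (Ne.symm hne)⟩
    exact Or.inr (Or.inl rfl)
  · have hby : b ≤ y := (h.le_iff y hy x hx).2.1 hxy.le
    obtain rfl : y = b := by_contra fun hne =>
      hcov_s b h.right_mem ⟨h.lt_right hx, hby.lt_of_ne (Ne.symm hne)⟩
    obtain rfl : x = M := by_contra fun hne =>
      hcov_c M hM.1 ⟨(hM.2 hx).lt_of_ne hne, h.lt_right hM.1⟩
    exact Or.inr (Or.inr rfl)
  · exact Or.inl (Or.inr ⟨hx, hy, hxy, hcov_c⟩)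

lemma subset_coverPairs_union (h : IsAdjunct s c a b) {m M : α} (hm : IsLeast c m)
    (hM : IsGreatest c M) :
    coverPairs s ∪ coverPairs c ∪ {(a, m), (M, b)} ⊆ coverPairs (s ∪ c) := by
  rintro ⟨x, y⟩ hp
  simp only [mem_union, mem_insert_iff, mem_singleton_iff, Prod.mk.injEq] at hp
  rcases hp with (⟨hx, hy, hxy, hcov⟩ | ⟨hx, hy, hxy, hcov⟩) | ⟨rfl, rfl⟩ | ⟨rfl, rfl⟩
  · refine ⟨Or.inl hx, Or.inl hy, hxy, ?_⟩
    rintro z (hz | hz) ⟨hxz, hzy⟩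
    · exact hcov z hz ⟨hxz, hzy⟩
    · -- then `x ≤ a < z₀ < b ≤ y` with `z₀ ∈ s`
      obtain ⟨z₀, hz₀, haz₀, hz₀b⟩ := h.exists_between
      exact hcov z₀ hz₀ ⟨((h.le_iff x hx z hz).1.1 hxz.le).trans_lt haz₀,
        hz₀b.trans_le ((h.le_iff y hy z hz).2.1 hzy.le)⟩
  · refine ⟨Or.inr hx, Or.inr hy, hxy, ?_⟩
    rintro z (hz | hz) ⟨hxz, hzy⟩
    · exact h.lt.not_ge (((h.le_iff z hz x hx).2.1 hxz.le).trans
        ((h.le_iff z hz y hy).1.1 hzy.le))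
    · exact hcov z hz ⟨hxz, hzy⟩
  · refine ⟨Or.inl h.left_mem, Or.inr hm.1, h.left_lt hm.1, ?_⟩
    rintro z (hz | hz) ⟨hxz, hzy⟩
    · exact hxz.not_ge ((h.le_iff z hz _ hm.1).1.1 hzy.le)
    · exact hzy.not_ge (hm.2 hz)
  · refine ⟨Or.inr hM.1, Or.inl h.right_mem, h.lt_right hM.1, ?_⟩
    rintro z (hz | hz) ⟨hxz, hzy⟩
    · exact hzy.not_ge ((h.le_iff z hz _ hM.1).2.1 hxz.le)
    · exact hxz.not_ge (hM.2 hz)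

/-- The covers of an adjunct `s ]ᵇₐ c` of a chain `c` are those of `s`, those of `c`, and
`a ⋖ min c`, `max c ⋖ b`. -/
lemma ncard_coverPairs_union [Finite α] (h : IsAdjunct s c a b) (hc : IsChain (· ≤ ·) c)
    (hne : c.Nonempty) :
    (coverPairs (s ∪ c)).ncard = (coverPairs s).ncard + c.ncard + 1 := by
  obtain ⟨m, hm⟩ := hc.exists_isLeast (toFinite c) hne
  obtain ⟨M, hM⟩ := hc.exists_isGreatest (toFinite c) hne
  have hsc : Disjoint (coverPairs s) (coverPairs c) :=
    disjoint_left.2 fun p hps hpc => h.notMem_left hpc.1 hps.1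
  have hnew : Disjoint (coverPairs s ∪ coverPairs c) {(a, m), (M, b)} := by
    refine disjoint_right.2 ?_
    rintro _ (rfl | rfl) (hp | hp)
    exacts [h.notMem_left hm.1 hp.2.1, h.notMem_left hp.1 h.left_mem,
      h.notMem_left hM.1 hp.1, h.notMem_left hp.2.1 h.right_mem]
  have haM : (a, m) ≠ (M, b) := fun he => h.notMem_left hM.1 ((Prod.mk.inj he).1 ▸ h.left_mem)
  rw [(h.coverPairs_union_subset hm hM).antisymm (h.subset_coverPairs_union hm hM),
    ncard_union_eq hnew, ncard_union_eq hsc, ncard_pair haM,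
    ← hc.ncard_coverPairs_add_one (toFinite c) hne]
  ring

end IsAdjunct

end AdjunctStep

namespace AdjunctRep

variable {α : Type*} [Lattice α] {C₀ s : Set α} {l : List (Set α × α × α)}

lemma adjoin {c : Set α} {a b : α} (h : AdjunctRep C₀ s l) (hc : IsChain (· ≤ ·) c)
    (hne : c.Nonempty) (hadj : IsAdjunct s c a b) :
    AdjunctRep C₀ (s ∪ c) (l ++ [(c, a, b)]) :=
  step c a b h hc hne hadj.disjoint hadj.left_mem hadj.right_mem hadj.lt hadj.exists_between
    hadj.le_iff

lemma nonempty (h : AdjunctRep C₀ s l) : s.Nonempty := by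
  induction h with
  | base _ hne => exact hne
  | step _ _ _ _ _ _ _ _ _ _ _ _ ih => exact ih.mono subset_union_left

lemma ncard_coverPairs_add_one [Finite α] (h : AdjunctRep C₀ s l) :
    (coverPairs s).ncard + 1 = s.ncard + l.length := by
  induction h with
  | base hchain hne => simpa using hchain.ncard_coverPairs_add_one (toFinite C₀) hne
  | step c a b _ hc hcne hdisj ha hb _ hnotcov hord ih =>
    rw [(⟨hdisj, ha, hb, hnotcov, hord⟩ : IsAdjunct _ c a b).ncard_coverPairs_union hc hcne,
      ncard_union_eq hdisj, List.length_append, List.length_singleton]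
    omega

end AdjunctRep

section CoverGraph

variable {α : Type*} [PartialOrder α]

lemma coverGraph_edgeSet :
    (coverGraph α).edgeSet = (fun p : α × α => s(p.1, p.2)) '' {p | p.1 ⋖ p.2} := by
  ext e
  induction e using Sym2.ind with
  | _ x y =>
    simp only [SimpleGraph.mem_edgeSet, coverGraph, mem_image, mem_ofPred_eq, Prod.exists,
      Sym2.eq_iff]
    constructor
    · rintro (h | h)
      exacts [⟨x, y, h, Or.inl ⟨rfl, rfl⟩⟩, ⟨y, x, h, Or.inr ⟨rfl, rfl⟩⟩]
    · rintro ⟨x', y', h, ⟨rfl, rfl⟩ | ⟨rfl, rfl⟩⟩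
      exacts [Or.inl h, Or.inr h]

lemma card_edgeSet_coverGraph :
    Nat.card (coverGraph α).edgeSet = {p : α × α | p.1 ⋖ p.2}.ncard := by
  have hinj : InjOn (fun p : α × α => s(p.1, p.2)) {p | p.1 ⋖ p.2} := by
    rintro ⟨x, y⟩ hxy ⟨x', y'⟩ hxy' he
    rcases Sym2.eq_iff.1 he with ⟨rfl, rfl⟩ | ⟨rfl, rfl⟩
    · rfl
    · exact (hxy.lt.trans hxy'.lt).false.elim
  rw [Nat.card_coe_set_eq, coverGraph_edgeSet, hinj.ncard_image]

lemma coverGraph_connected [OrderBot α] [LocallyFiniteOrder α] : (coverGraph α).Connected :=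
  (SimpleGraph.connected_iff_exists_forall_reachable _).2 ⟨⊥, fun _ =>
    (SimpleGraph.reachable_iff_reflTransGen _ _).2 <|
      Relation.ReflTransGen.mono (fun _ _ h => Or.inl h) _ _ (le_iff_reflTransGen_covBy.1 bot_le)⟩

lemma card_connectedComponent_coverGraph [OrderBot α] [LocallyFiniteOrder α] :
    Nat.card (coverGraph α).ConnectedComponent = 1 :=
  Nat.card_eq_one_iff_unique.2
    ⟨coverGraph_connected.preconnected.subsingleton_connectedComponent, inferInstance⟩

end CoverGraph

lemma AdjunctRep.nullity_eq {α : Type*} [Lattice α] [Finite α] {C₀ : Set α}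
    {l : List (Set α × α × α)} (h : AdjunctRep C₀ univ l) : nullity α = l.length := by
  classical
  let := Fintype.ofFinite α
  have : Nonempty α := h.nonempty.to_subtype.map Subtype.val
  let := Fintype.toOrderBot α
  let : LocallyFiniteOrder α := Fintype.toLocallyFiniteOrder
  have hcount := h.ncard_coverPairs_add_one
  rw [coverPairs_univ, ncard_univ, ← card_edgeSet_coverGraph] at hcount
  rw [nullity, card_connectedComponent_coverGraph]
  omega

/-- Relative to `s`, the element `x` lies strictly inside the cover `u ⋖ w` of `s`. -/
structure FillsCover {α : Type*} [PartialOrder α] (s : Set α) (u w x : α) : Prop where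
  left_mem : u ∈ s
  right_mem : w ∈ s
  le_iff_le_left : ∀ y ∈ s, y ≤ x ↔ y ≤ u
  le_iff_le_right : ∀ y ∈ s, x ≤ y ↔ w ≤ y
  not_between : ∀ z ∈ s, ¬(u < z ∧ z < w)

namespace FillsCover

variable {α : Type*} [PartialOrder α] {s t c : Set α} {u w x : α}

lemma mono (h : FillsCover t u w x) (hst : s ⊆ t) (hu : u ∈ s) (hw : w ∈ s) :
    FillsCover s u w x :=
  ⟨hu, hw, fun y hy => h.le_iff_le_left y (hst hy), fun y hy => h.le_iff_le_right y (hst hy),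
    fun z hz => h.not_between z (hst hz)⟩

lemma left_le (h : FillsCover s u w x) : u ≤ x := (h.le_iff_le_left u h.left_mem).2 le_rfl

lemma le_right (h : FillsCover s u w x) : x ≤ w := (h.le_iff_le_right w h.right_mem).2 le_rfl

lemma isChain_insert (h : FillsCover s u w x) (hc : IsChain (· ≤ ·) c) (hcs : c ⊆ s)
    (hcu : ∀ y ∈ c, y ≤ u ∨ u ≤ y) (hcw : ∀ y ∈ c, y ≤ w ∨ w ≤ y) :
    IsChain (· ≤ ·) (insert x c) := by
  refine hc.insert fun y hy _ => ?_
  by_cases hyu : y ≤ u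
  · exact Or.inr ((h.le_iff_le_left y (hcs hy)).2 hyu)
  by_cases hwy : w ≤ y
  · exact Or.inl ((h.le_iff_le_right y (hcs hy)).2 hwy)
  exact (h.not_between y (hcs hy) ⟨((hcu y hy).resolve_left hyu).lt_of_not_ge hyu,
    ((hcw y hy).resolve_right hwy).lt_of_not_ge hwy⟩).elim

end FillsCover

lemma IsAdjunct.insert_right {α : Type*} [PartialOrder α] {s c : Set α} {a b u w x : α}
    (h : IsAdjunct s c a b) (hc : IsChain (· ≤ ·) c) (hx : x ∉ s)
    (hgap : FillsCover (s ∪ c) u w x) (huw : u ∈ c ∨ w ∈ c) :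
    IsChain (· ≤ ·) (insert x c) ∧ IsAdjunct s (insert x c) a b := by
  have hu : u ∈ c ∨ u = a := by
    refine hgap.left_mem.symm.imp_right fun hus => ?_
    have hwc : w ∈ c := huw.resolve_left fun huc => h.notMem_left huc hus
    exact eq_of_le_of_not_lt ((h.le_iff u hus w hwc).1.1 (hgap.left_le.trans hgap.le_right))
      fun hua => hgap.not_between a (Or.inl h.left_mem) ⟨hua, h.left_lt hwc⟩
  have hw : w ∈ c ∨ w = b := by
    refine hgap.right_mem.symm.imp_right fun hws => ?_
    have huc : u ∈ c := huw.resolve_right fun hwc => h.notMem_left hwc hws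
    refine (eq_of_le_of_not_lt ((h.le_iff w hws u huc).2.1 (hgap.left_le.trans hgap.le_right))
      fun hbw => hgap.not_between b (Or.inl h.right_mem) ⟨h.lt_right huc, hbw⟩).symm
  have hchain : IsChain (· ≤ ·) (insert x c) := by
    refine hgap.isChain_insert hc subset_union_right (fun y hy => ?_) (fun y hy => ?_)
    · rcases hu with huc | rfl
      exacts [hc.total hy huc, Or.inr (h.left_lt hy).le]
    · rcases hw with hwc | rfl
      exacts [hc.total hy hwc, Or.inl (h.lt_right hy).le]
  refine ⟨hchain, disjoint_insert_right.2 ⟨hx, h.disjoint⟩, h.left_mem, h.right_mem,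
    h.exists_between, ?_⟩
  rintro p hp y (rfl | hy)
  · rw [hgap.le_iff_le_left p (Or.inl hp), hgap.le_iff_le_right p (Or.inl hp)]
    constructor
    · rcases hu with huc | rfl
      exacts [(h.le_iff p hp u huc).1, Iff.rfl]
    · rcases hw with hwc | rfl
      exacts [(h.le_iff p hp w hwc).2, Iff.rfl]
  · exact h.le_iff p hp y hy

namespace AdjunctRep

variable {α : Type*} [Lattice α] {C₀ s : Set α} {l : List (Set α × α × α)} {u w x : α}

lemma insert_of_extreme (h : AdjunctRep C₀ s l) (hx : x ∉ s)
    (hext : (∀ y ∈ s, x ≤ y) ∨ ∀ y ∈ s, y ≤ x) : AdjunctRep (insert x C₀) (insert x s) l := by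
  induction h with
  | base hchain hne =>
    exact .base (hchain.insert fun y hy _ => hext.imp (· y hy) (· y hy)) (insert_nonempty _ _)
  | step c a b _ hc hcne hdisj ha hb _ hnotcov hord ih =>
    have hadj : IsAdjunct _ c a b := ⟨hdisj, ha, hb, hnotcov, hord⟩
    have hxc : x ∉ c := fun hxc => hx (Or.inr hxc)
    have hord_x : ∀ y ∈ c, (x ≤ y ↔ x ≤ a) ∧ (y ≤ x ↔ b ≤ x) := by
      intro y hy
      rcases hext with hbot | htop
      · refine ⟨iff_of_true (hbot y (Or.inr hy)) (hbot a (Or.inl ha)),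
          iff_of_false (fun hyx => hxc ?_) (fun hbx => hx ?_)⟩
        · exact le_antisymm (hbot y (Or.inr hy)) hyx ▸ hy
        · exact le_antisymm (hbot b (Or.inl hb)) hbx ▸ Or.inl hb
      · refine ⟨iff_of_false (fun hxy => hxc ?_) (fun hxa => hx ?_),
          iff_of_true (htop y (Or.inr hy)) (htop b (Or.inl hb))⟩
        · exact le_antisymm hxy (htop y (Or.inr hy)) ▸ hy
        · exact le_antisymm hxa (htop a (Or.inl ha)) ▸ Or.inl ha
    rw [← insert_union]
    exact (ih (fun hxs => hx (Or.inl hxs)) (hext.imp (fun h y hy => h y (Or.inl hy))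
      (fun h y hy => h y (Or.inl hy)))).adjoin hc hcne (hadj.insert_left hxc hord_x)

lemma exists_insert_of_fillsCover (h : AdjunctRep C₀ s l) (hx : x ∉ s)
    (hgap : FillsCover s u w x) : ∃ C₀' l', AdjunctRep C₀' (insert x s) l' := by
  induction h with
  | base hchain hne =>
    exact ⟨_, [], .base (hgap.isChain_insert hchain subset_rfl
      (fun y hy => hchain.total hy hgap.left_mem) (fun y hy => hchain.total hy hgap.right_mem))
      (insert_nonempty _ _)⟩
  | @step s l c a b hs hc hcne hdisj ha hb _ hnotcov hord ih =>
    have hadj : IsAdjunct s c a b := ⟨hdisj, ha, hb, hnotcov, hord⟩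
    by_cases huw : u ∈ s ∧ w ∈ s
    · obtain ⟨C₀', l', hs'⟩ := ih (fun hxs => hx (Or.inl hxs))
        (hgap.mono subset_union_left huw.1 huw.2)
      have hord_x : ∀ y ∈ c, (x ≤ y ↔ x ≤ a) ∧ (y ≤ x ↔ b ≤ x) := fun y hy =>
        ⟨(hgap.le_iff_le_right y (Or.inr hy)).trans <| (hadj.le_iff w huw.2 y hy).1.trans
          (hgap.le_iff_le_right a (Or.inl ha)).symm,
        (hgap.le_iff_le_left y (Or.inr hy)).trans <| (hadj.le_iff u huw.1 y hy).2.trans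
          (hgap.le_iff_le_left b (Or.inl hb)).symm⟩
      rw [← insert_union]
      exact ⟨C₀', _, hs'.adjoin hc hcne (hadj.insert_left (fun hxc => hx (Or.inr hxc)) hord_x)⟩
    · have huw' : u ∈ c ∨ w ∈ c := by
        rcases hgap.left_mem with hu | hu <;> rcases hgap.right_mem with hw | hw <;> tauto
      obtain ⟨hchain, hadj'⟩ := hadj.insert_right hc (fun hxs => hx (Or.inl hxs)) hgap huw'
      rw [← union_insert]
      exact ⟨C₀, _, hs.adjoin hchain (insert_nonempty _ _) hadj'⟩

end AdjunctRep

section Sublattice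

variable {α : Type*} [Lattice α] {s : Set α} {x y : α}

lemma IsSublatticeSet.supClosed (hs : IsSublatticeSet s) : SupClosed s :=
  fun _ ha _ hb => (hs _ ha _ hb).2

lemma IsSublatticeSet.infClosed (hs : IsSublatticeSet s) : InfClosed s :=
  fun _ ha _ hb => (hs _ ha _ hb).1

lemma SupClosed.exists_isGreatest (hs : SupClosed s) (hfin : s.Finite) (hne : s.Nonempty) :
    ∃ u, IsGreatest s u := by
  obtain ⟨u, hu⟩ := hfin.exists_maximal hne
  exact ⟨u, hu.prop, fun y hy => le_sup_right.trans (hu.2 (hs hu.prop hy) le_sup_left)⟩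

lemma InfClosed.exists_isLeast (hs : InfClosed s) (hfin : s.Finite) (hne : s.Nonempty) :
    ∃ w, IsLeast s w := by
  obtain ⟨w, hw⟩ := hfin.exists_minimal hne
  exact ⟨w, hw.prop, fun y hy => (hw.2 (hs hw.prop hy) inf_le_left).trans inf_le_right⟩

lemma InfClosed.inf_mem_of_insert (hs : InfClosed (insert x s)) (hy : y ∈ s)
    (hxy : ¬x ≤ y) : x ⊓ y ∈ s :=
  (hs (mem_insert x s) (mem_insert_of_mem x hy)).resolve_left fun he => hxy (inf_eq_left.1 he)

lemma SupClosed.sup_mem_of_insert (hs : SupClosed (insert x s)) (hy : y ∈ s)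
    (hyx : ¬y ≤ x) : x ⊔ y ∈ s :=
  (hs (mem_insert x s) (mem_insert_of_mem x hy)).resolve_left fun he => hyx (sup_eq_left.1 he)

end Sublattice

lemma AdjunctRep.exists_insert {α : Type*} [Lattice α] [Finite α] {C₀ s : Set α}
    {l : List (Set α × α × α)} {x : α} (h : AdjunctRep C₀ s l) (hs : IsSublatticeSet s)
    (hxs : IsSublatticeSet (insert x s)) (hx : x ∉ s) :
    ∃ C₀' l', AdjunctRep C₀' (insert x s) l' := by
  by_cases hbelow : ∃ y ∈ s, y < x
  swap
  · refine ⟨_, _, h.insert_of_extreme hx (Or.inl fun y hy => by_contra fun hxy => hbelow ?_)⟩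
    exact ⟨_, hxs.infClosed.inf_mem_of_insert hy hxy, inf_lt_left.2 hxy⟩
  by_cases habove : ∃ y ∈ s, x < y
  swap
  · refine ⟨_, _, h.insert_of_extreme hx (Or.inr fun y hy => by_contra fun hyx => habove ?_)⟩
    exact ⟨_, hxs.supClosed.sup_mem_of_insert hy hyx, left_lt_sup.2 hyx⟩
  have hne : ∀ {y}, y ∈ s → y ≠ x := fun hy hyx => hx (hyx ▸ hy)
  obtain ⟨u, ⟨hus, hux⟩, hu⟩ : ∃ u, IsGreatest {y ∈ s | y < x} u :=
    SupClosed.exists_isGreatest (fun y hy z hz => ⟨hs.supClosed hy.1 hz.1,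
      (sup_le hy.2.le hz.2.le).lt_of_ne (hne (hs.supClosed hy.1 hz.1))⟩) (toFinite _) hbelow
  obtain ⟨w, ⟨hws, hxw⟩, hw⟩ : ∃ w, IsLeast {y ∈ s | x < y} w :=
    InfClosed.exists_isLeast (fun y hy z hz => ⟨hs.infClosed hy.1 hz.1,
      (le_inf hy.2.le hz.2.le).lt_of_ne (hne (hs.infClosed hy.1 hz.1)).symm⟩) (toFinite _) habove
  have hdown : ∀ y ∈ s, y ≤ x ↔ y ≤ u := fun y hy =>
    ⟨fun hyx => hu ⟨hy, hyx.lt_of_ne (hne hy)⟩, fun hyu => hyu.trans hux.le⟩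
  have hup : ∀ y ∈ s, x ≤ y ↔ w ≤ y := fun y hy =>
    ⟨fun hxy => hw ⟨hy, hxy.lt_of_ne (hne hy).symm⟩, fun hwy => hxw.le.trans hwy⟩
  by_cases hbetween : ∃ z ∈ s, u < z ∧ z < w
  · rw [← union_singleton]
    exact ⟨C₀, _, h.adjoin subsingleton_singleton.isChain (singleton_nonempty x)
      ⟨disjoint_singleton_right.2 hx, hus, hws, hbetween,
        fun p hp _ hy => hy ▸ ⟨hdown p hp, hup p hp⟩⟩⟩
  · exact h.exists_insert_of_fillsCover hx
      ⟨hus, hws, hdown, hup, fun z hz hz' => hbetween ⟨z, hz, hz'⟩⟩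

lemma Dismantlable.exists_adjunctRep {α : Type*} [Lattice α] [Fintype α] [Nonempty α]
    (hd : Dismantlable α) : ∃ (C₀ : Set α) (l : List (Set α × α × α)), AdjunctRep C₀ univ l := by
  obtain ⟨f, hf, hmono, htop⟩ := hd
  suffices ∀ i, 1 ≤ i → i ≤ Fintype.card α → ∃ C₀ l, AdjunctRep C₀ (f i) l from
    htop ▸ this _ Fintype.card_pos le_rfl
  intro i hi
  induction i, hi using Nat.le_induction with
  | base =>
    intro hcard
    obtain ⟨x, hx⟩ := ncard_eq_one.1 (hf 1 le_rfl hcard).1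
    rw [hx]
    exact ⟨{x}, [], .base subsingleton_singleton.isChain (singleton_nonempty x)⟩
  | succ n hn ih =>
    intro hcard
    obtain ⟨C₀, l, hrep⟩ := ih (by omega)
    obtain ⟨x, hx, hfx⟩ := (exists_eq_insert_iff_ncard (toFinite _)).2
      ⟨hmono n hn (by omega), by rw [(hf n hn (by omega)).1, (hf (n + 1) (by omega) hcard).1]⟩
    have hsub := (hf (n + 1) (by omega) hcard).2
    rw [← hfx] at hsub ⊢
    exact hrep.exists_insert (hf n hn (by omega)).2 hsub hx

theorem stmt5_general {α : Type*} [Lattice α] [Fintype α] [Nonempty α]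
    (hd : Dismantlable α) (r : ℕ) :
    nullity α = (r : ℤ) - 1 ↔
      ∃ (C₀ : Set α) (l : List (Set α × α × α)),
        AdjunctRep C₀ Set.univ l ∧ l.length + 1 = r := by
  obtain ⟨C₀, l, hrep⟩ := hd.exists_adjunctRep
  constructor
  · intro hnullity
    rw [hrep.nullity_eq] at hnullity
    exact ⟨C₀, l, hrep, by omega⟩
  · rintro ⟨C₀', l', hrep', rfl⟩
    rw [hrep'.nullity_eq]
    push_cast
    ring

/-- A finite dismantlable lattice with `n` elements has nullity `r - 1` if and only
if it is an adjunct of `r` chains. -/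
theorem stmt5 {α : Type*} [Lattice α] [Fintype α] [Nonempty α]
    (hd : Dismantlable α) (r : ℕ) (hr : 1 ≤ r) :
    nullity α = (r : ℤ) - 1 ↔
      ∃ (C₀ : Set α) (l : List (Set α × α × α)),
        AdjunctRep C₀ Set.univ l ∧ l.length + 1 = r :=
  stmt5_general hd r
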